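/- arXiv:1811.09879 — 2 statements merged into one kernel-verified Lean document; each statement's English description precedes it below -/
import Mathlib

section
/- Let J and K be open intervals, and let E, F, G be normalizable semideviations on the intervals I := J + K (the set of sums), J, and K, respectively. Then the following are equivalent (each inequality for all n ∈ ℕ, x ∈ Jⁿ, y ∈ Kⁿ, weight vectors λ, with x+y the coordinatewise sum): (i) LLD_E(x+y,λ) ≤ LLD_F(x,λ) + LLD_G(y,λ); (ii) LD_E(x+y,λ) ≤ LD_F(x,λ) + LD_G(y,λ); (iii) UD_E(x+y,λ) ≤ UD_F(x,λ) + UD_G(y,λ); (iv) UUD_E(x+y,λ) ≤ UUD_F(x,λ) + UUD_G(y,λ); (v) LLD_E(x+y,λ) ≤ UUD_F(x,λ) + UUD_G(y,λ); (vi) for all p, u ∈ J and q, v ∈ K, E*(p+q, u+v) ≤ F*(p,u) + G*(q,v). -/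
open Set Filter Topology

/-- The weighted sum `e(y) = λ₁E(x₁,y)+⋯+λₙE(xₙ,y)`. -/
noncomputable def eFun (E : ℝ → ℝ → ℝ) {n : ℕ} (x lam : Fin n → ℝ) (y : ℝ) : ℝ :=
  ∑ i, lam i * E (x i) y

/-- Lower semideviation mean `LLD_E(x,λ) = inf {y ∈ I : e(y) ≤ 0}`. -/
noncomputable def LLD (I : Set ℝ) (E : ℝ → ℝ → ℝ) {n : ℕ} (x lam : Fin n → ℝ) : ℝ :=
  sInf {y : ℝ | y ∈ I ∧ eFun E x lam y ≤ 0}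

/-- Upper semideviation mean `UUD_E(x,λ) = sup {y ∈ I : e(y) ≥ 0}`. -/
noncomputable def UUD (I : Set ℝ) (E : ℝ → ℝ → ℝ) {n : ℕ} (x lam : Fin n → ℝ) : ℝ :=
  sSup {y : ℝ | y ∈ I ∧ 0 ≤ eFun E x lam y}

/-- `LD_E(x,λ) = inf {y ∈ I : e(y) < 0}`. -/
noncomputable def LD (I : Set ℝ) (E : ℝ → ℝ → ℝ) {n : ℕ} (x lam : Fin n → ℝ) : ℝ :=
  sInf {y : ℝ | y ∈ I ∧ eFun E x lam y < 0}

/-- `UD_E(x,λ) = sup {y ∈ I : e(y) > 0}`. -/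
noncomputable def UD (I : Set ℝ) (E : ℝ → ℝ → ℝ) {n : ℕ} (x lam : Fin n → ℝ) : ℝ :=
  sSup {y : ℝ | y ∈ I ∧ 0 < eFun E x lam y}

/-- A weight vector: nonnegative entries with positive sum. -/
def IsWeight {n : ℕ} (lam : Fin n → ℝ) : Prop :=
  (∀ i, 0 ≤ lam i) ∧ 0 < ∑ i, lam i

/-- `E` is a semideviation on `I`: for distinct `x, y ∈ I` the sign of `E x y`
coincides with the sign of `x - y`. -/
def IsSemideviation (I : Set ℝ) (E : ℝ → ℝ → ℝ) : Prop :=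
  ∀ x ∈ I, ∀ y ∈ I, x ≠ y → Real.sign (E x y) = Real.sign (x - y)

/-- `E` is a normalizable semideviation on `I`, with `d x = ∂₂E(x,x)`. -/
def IsNormalizable (I : Set ℝ) (E : ℝ → ℝ → ℝ) (d : ℝ → ℝ) : Prop :=
  IsSemideviation I E ∧
  (∀ x ∈ I, ContinuousOn (fun y => E x y) I) ∧
  (∀ x ∈ I, HasDerivWithinAt (fun y => E x y) (d x) I x) ∧
  (∀ x ∈ I, d x < 0) ∧
  ContinuousOn d I

/-- The normalization `E*(x,y) = E(x,y)/(-∂₂E(y,y))`. -/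
noncomputable def nrm (E : ℝ → ℝ → ℝ) (d : ℝ → ℝ) (x y : ℝ) : ℝ :=
  E x y / (-(d y))

/-!
Summing `E*(p+q, u+v) ≤ F*(p,u) + G*(q,v)` with the weights `λᵢ` gives
`e_{E*}(a+b) ≤ e_{F*}(a) + e_{G*}(b)`, so the sign conditions defining the means pass from
`a ∈ J` and `b ∈ K` to `a + b`. Normalizing rescales each sum `e` by a positive factor and so
changes none of the means; this gives (vi) ⟹ (i)–(iv), where for the upper means a point
`t > a + b` of `J + K` is split as `a' + b'` with `a' > a`, `b' > b`. Then (v) follows from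
`LLD ≤ UUD`.

Conversely, for the two points `(p, u)` with weights `(s, 1)` the sum is `s E(p,t) + E(u,t)`.
Since `E(u, ·)` vanishes at `u` with slope `∂₂E(u,u) < 0`, for small `s > 0` it changes sign
across `u + s (E*(p,u) ± ε)`, so each of the four means is `u + s E*(p,u) + o(s)`. Comparing the
first-order terms of any of the inequalities (i)–(v) gives (vi).
-/

open scoped Pointwise

section Order

variable {α : Type*} [ConditionallyCompleteLinearOrder α] [DenselyOrdered α] {S : Set α}
  {a b θ : α}

theorem csInf_mem_Icc_of_Ioo_subset (hθb : θ < b) (hIoo : Ioo θ b ⊆ S) (hS : S ⊆ Ici a) :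
    sInf S ∈ Icc a θ :=
  ⟨le_csInf ((nonempty_Ioo.2 hθb).mono hIoo) hS,
    (csInf_le_csInf ⟨a, hS⟩ (nonempty_Ioo.2 hθb) hIoo).trans_eq (csInf_Ioo hθb)⟩

theorem csSup_mem_Icc_of_Ioo_subset (hbθ : b < θ) (hIoo : Ioo b θ ⊆ S) (hS : S ⊆ Iic a) :
    sSup S ∈ Icc θ a :=
  ⟨(csSup_Ioo hbθ).symm.trans_le (csSup_le_csSup ⟨a, hS⟩ (nonempty_Ioo.2 hbθ) hIoo),
    csSup_le ((nonempty_Ioo.2 hbθ).mono hIoo) hS⟩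

end Order

section Intervals

variable {I J K : Set ℝ}

theorem Set.OrdConnected.neg (hI : I.OrdConnected) : (-I).OrdConnected :=
  convex_iff_ordConnected.1 (convex_iff_ordConnected.2 hI).neg

theorem Set.OrdConnected.add (hJ : J.OrdConnected) (hK : K.OrdConnected) :
    (J + K).OrdConnected :=
  convex_iff_ordConnected.1 ((convex_iff_ordConnected.2 hJ).add (convex_iff_ordConnected.2 hK))

theorem exists_add_eq_of_le_sub (hJo : IsOpen J) (hK : K.OrdConnected) {a b q t : ℝ}
    (ha : a ∈ J) (hb : b ∈ K) (hq : q ∈ K) (hab : a + b < t) (htq : t - a ≤ q) :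
    ∃ a' ∈ J, ∃ b' ∈ K, a < a' ∧ b < b' ∧ a' + b' = t := by
  obtain ⟨a', ⟨ha', ha't⟩, haa'⟩ : ∃ a', (a' ∈ J ∧ a' < t - b) ∧ a < a' :=
    (Eventually.and (nhdsWithin_le_nhds (inter_mem (hJo.mem_nhds ha)
      (Iio_mem_nhds (show a < t - b by linarith)))) (self_mem_nhdsWithin (s := Ioi a))).exists
  exact ⟨a', ha', t - a', hK.out hb hq ⟨by linarith, by linarith⟩, haa', by linarith, by ring⟩

theorem exists_add_eq_of_add_lt (hJ : J.OrdConnected) (hJo : IsOpen J) (hK : K.OrdConnected)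
    (hKo : IsOpen K) {a b t : ℝ} (ha : a ∈ J) (hb : b ∈ K) (ht : t ∈ J + K) (hab : a + b < t) :
    ∃ a' ∈ J, ∃ b' ∈ K, a < a' ∧ b < b' ∧ a' + b' = t := by
  obtain ⟨p, hp, q, hq, rfl⟩ := ht
  dsimp only at hab ⊢
  rcases le_or_gt p a with hpa | hap
  · exact exists_add_eq_of_le_sub hJo hK ha hb hq hab (by linarith)
  rcases le_or_gt q b with hqb | hbq
  · obtain ⟨b', hb', a', ha', hbb', haa', hsum⟩ :=
      exists_add_eq_of_le_sub (t := p + q) hKo hJ hb ha hp (by linarith) (by linarith)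
    exact ⟨a', ha', b', hb', haa', hbb', by linarith⟩
  · exact ⟨p, hp, q, hq, hap, hbq, rfl⟩

end Intervals

namespace IsSemideviation

variable {I : Set ℝ} {E : ℝ → ℝ → ℝ} {x y : ℝ}

theorem pos_of_lt (h : IsSemideviation I E) (hx : x ∈ I) (hy : y ∈ I) (hyx : y < x) :
    0 < E x y := by
  have hs := h x hx y hy hyx.ne'
  rw [Real.sign_of_pos (sub_pos.2 hyx), Real.sign] at hs
  split_ifs at hs <;> first | assumption | norm_num at hs

theorem neg_of_lt (h : IsSemideviation I E) (hx : x ∈ I) (hy : y ∈ I) (hxy : x < y) :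
    E x y < 0 := by
  have hs := h x hx y hy hxy.ne
  rw [Real.sign_of_neg (sub_neg.2 hxy), Real.sign] at hs
  split_ifs at hs <;> first | assumption | norm_num at hs

theorem apply_self (h : IsSemideviation I E) (hIo : IsOpen I) (hx : x ∈ I)
    (hc : ContinuousAt (E x) x) : E x x = 0 := by
  have hI : ∀ᶠ t in 𝓝 x, t ∈ I := hIo.mem_nhds hx
  have hc' (s : Set ℝ) : Tendsto (E x) (𝓝[s] x) (𝓝 (E x x)) :=
    hc.tendsto.mono_left nhdsWithin_le_nhds
  refine le_antisymm (le_of_tendsto (hc' (Ioi x)) ?_) (ge_of_tendsto (hc' (Iio x)) ?_)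
  · filter_upwards [nhdsWithin_le_nhds hI, self_mem_nhdsWithin (s := Ioi x)] with t ht hxt
    exact (h.neg_of_lt hx ht hxt).le
  · filter_upwards [nhdsWithin_le_nhds hI, self_mem_nhdsWithin (s := Iio x)] with t ht htx
    exact (h.pos_of_lt hx ht htx).le

end IsSemideviation

theorem IsWeight.exists_pos {n : ℕ} {lam : Fin n → ℝ} (h : IsWeight lam) : ∃ i, 0 < lam i := by
  by_contra! hle
  exact (Finset.sum_nonpos fun i _ => hle i).not_gt h.2

theorem isWeight_two {s : ℝ} (hs : 0 ≤ s) : IsWeight ![s, 1] :=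
  ⟨Fin.forall_fin_two.2 ⟨hs, zero_le_one⟩, by simp [Fin.sum_univ_two]; linarith⟩

theorem eFun_two (E : ℝ → ℝ → ℝ) (x : Fin 2 → ℝ) (s : ℝ) :
    eFun E x ![s, 1] = fun t => s * E (x 0) t + E (x 1) t := by
  ext t
  simp [eFun, Fin.sum_univ_two]

def IsSignBracket (I : Set ℝ) (e : ℝ → ℝ) (θ₁ θ₂ : ℝ) : Prop :=
  (∀ t ∈ I, t < θ₁ → 0 < e t) ∧ (∀ t ∈ I, θ₂ < t → e t < 0)

namespace IsSignBracket

variable {I S : Set ℝ} {e : ℝ → ℝ} {θ₁ θ₂ t : ℝ}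

theorem le_of_nonpos (h : IsSignBracket I e θ₁ θ₂) (ht : t ∈ I) (he : e t ≤ 0) : θ₁ ≤ t :=
  not_lt.1 fun hlt => (h.1 t ht hlt).not_ge he

theorem le_of_nonneg (h : IsSignBracket I e θ₁ θ₂) (ht : t ∈ I) (he : 0 ≤ e t) : t ≤ θ₂ :=
  not_lt.1 fun hlt => (h.2 t ht hlt).not_ge he

theorem exists_Ioo_subset_neg (h : IsSignBracket I e θ₁ θ₂) (hIo : IsOpen I) (hθ₂ : θ₂ ∈ I) :
    ∃ b, θ₂ < b ∧ Ioo θ₂ b ⊆ {t | t ∈ I ∧ e t < 0} := by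
  obtain ⟨b, hb, hsub⟩ := exists_Ico_subset_of_mem_nhds (hIo.mem_nhds hθ₂) (exists_gt θ₂)
  exact ⟨b, hb, fun t ht =>
    ⟨hsub (Ioo_subset_Ico_self ht), h.2 t (hsub (Ioo_subset_Ico_self ht)) ht.1⟩⟩

theorem exists_Ioo_subset_pos (h : IsSignBracket I e θ₁ θ₂) (hIo : IsOpen I) (hθ₁ : θ₁ ∈ I) :
    ∃ b, b < θ₁ ∧ Ioo b θ₁ ⊆ {t | t ∈ I ∧ 0 < e t} := by
  obtain ⟨b, hb, hsub⟩ := exists_Ioc_subset_of_mem_nhds (hIo.mem_nhds hθ₁) (exists_lt θ₁)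
  exact ⟨b, hb, fun t ht =>
    ⟨hsub (Ioo_subset_Ioc_self ht), h.1 t (hsub (Ioo_subset_Ioc_self ht)) ht.2⟩⟩

theorem csInf_mem_Icc (h : IsSignBracket I e θ₁ θ₂) (hIo : IsOpen I) (hθ₂ : θ₂ ∈ I)
    (hS₁ : {t | t ∈ I ∧ e t < 0} ⊆ S) (hS₂ : S ⊆ {t | t ∈ I ∧ e t ≤ 0}) :
    sInf S ∈ Icc θ₁ θ₂ := by
  obtain ⟨b, hb, hsub⟩ := h.exists_Ioo_subset_neg hIo hθ₂
  exact csInf_mem_Icc_of_Ioo_subset hb (hsub.trans hS₁) fun t ht =>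
    h.le_of_nonpos (hS₂ ht).1 (hS₂ ht).2

theorem csSup_mem_Icc (h : IsSignBracket I e θ₁ θ₂) (hIo : IsOpen I) (hθ₁ : θ₁ ∈ I)
    (hS₁ : {t | t ∈ I ∧ 0 < e t} ⊆ S) (hS₂ : S ⊆ {t | t ∈ I ∧ 0 ≤ e t}) :
    sSup S ∈ Icc θ₁ θ₂ := by
  obtain ⟨b, hb, hsub⟩ := h.exists_Ioo_subset_pos hIo hθ₁
  exact csSup_mem_Icc_of_Ioo_subset hb (hsub.trans hS₁) fun t ht =>
    h.le_of_nonneg (hS₂ ht).1 (hS₂ ht).2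

theorem nonempty_bddBelow (h : IsSignBracket I e θ₁ θ₂) (hIo : IsOpen I) (hθ₂ : θ₂ ∈ I)
    (hS₁ : {t | t ∈ I ∧ e t < 0} ⊆ S) (hS₂ : S ⊆ {t | t ∈ I ∧ e t ≤ 0}) :
    S.Nonempty ∧ BddBelow S := by
  obtain ⟨b, hb, hsub⟩ := h.exists_Ioo_subset_neg hIo hθ₂
  exact ⟨((nonempty_Ioo.2 hb).mono hsub).mono hS₁, θ₁, fun t ht =>
    h.le_of_nonpos (hS₂ ht).1 (hS₂ ht).2⟩

theorem nonempty_bddAbove (h : IsSignBracket I e θ₁ θ₂) (hIo : IsOpen I) (hθ₁ : θ₁ ∈ I)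
    (hS₁ : {t | t ∈ I ∧ 0 < e t} ⊆ S) (hS₂ : S ⊆ {t | t ∈ I ∧ 0 ≤ e t}) :
    S.Nonempty ∧ BddAbove S := by
  obtain ⟨b, hb, hsub⟩ := h.exists_Ioo_subset_pos hIo hθ₁
  exact ⟨((nonempty_Ioo.2 hb).mono hsub).mono hS₁, θ₂, fun t ht =>
    h.le_of_nonneg (hS₂ ht).1 (hS₂ ht).2⟩

end IsSignBracket

namespace IsSemideviation

variable {I S : Set ℝ} {E : ℝ → ℝ → ℝ} {n : ℕ} {x lam : Fin n → ℝ} {t : ℝ}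

theorem eFun_pos (h : IsSemideviation I E) (hx : ∀ i, x i ∈ I) (hlam : IsWeight lam)
    (ht : t ∈ I) (htx : ∀ i, t < x i) : 0 < eFun E x lam t := by
  obtain ⟨i, hi⟩ := hlam.exists_pos
  exact Finset.sum_pos' (fun j _ => mul_nonneg (hlam.1 j) (h.pos_of_lt (hx j) ht (htx j)).le)
    ⟨i, Finset.mem_univ i, mul_pos hi (h.pos_of_lt (hx i) ht (htx i))⟩

theorem eFun_neg (h : IsSemideviation I E) (hx : ∀ i, x i ∈ I) (hlam : IsWeight lam)
    (ht : t ∈ I) (hxt : ∀ i, x i < t) : eFun E x lam t < 0 := by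
  obtain ⟨i, hi⟩ := hlam.exists_pos
  exact Finset.sum_neg'
    (fun j _ => mul_nonpos_of_nonneg_of_nonpos (hlam.1 j) (h.neg_of_lt (hx j) ht (hxt j)).le)
    ⟨i, Finset.mem_univ i, mul_neg_of_pos_of_neg hi (h.neg_of_lt (hx i) ht (hxt i))⟩

theorem exists_isSignBracket (h : IsSemideviation I E) (hx : ∀ i, x i ∈ I)
    (hlam : IsWeight lam) : ∃ θ₁ ∈ I, ∃ θ₂ ∈ I, IsSignBracket I (eFun E x lam) θ₁ θ₂ := by
  obtain ⟨i, -⟩ := hlam.exists_pos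
  have : Nonempty (Fin n) := ⟨i⟩
  obtain ⟨i₀, -, hi₀⟩ := Finset.univ.exists_min_image x Finset.univ_nonempty
  obtain ⟨i₁, -, hi₁⟩ := Finset.univ.exists_max_image x Finset.univ_nonempty
  exact ⟨x i₀, hx i₀, x i₁, hx i₁,
    fun t ht hlt => h.eFun_pos hx hlam ht fun j => hlt.trans_le (hi₀ j (Finset.mem_univ j)),
    fun t ht hlt => h.eFun_neg hx hlam ht fun j => (hi₁ j (Finset.mem_univ j)).trans_lt hlt⟩

theorem nonempty_bddBelow (h : IsSemideviation I E) (hx : ∀ i, x i ∈ I) (hlam : IsWeight lam)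
    (hIo : IsOpen I) (hS₁ : {t | t ∈ I ∧ eFun E x lam t < 0} ⊆ S)
    (hS₂ : S ⊆ {t | t ∈ I ∧ eFun E x lam t ≤ 0}) : S.Nonempty ∧ BddBelow S :=
  let ⟨_, _, _, hθ₂, hb⟩ := h.exists_isSignBracket hx hlam
  hb.nonempty_bddBelow hIo hθ₂ hS₁ hS₂

theorem nonempty_bddAbove (h : IsSemideviation I E) (hx : ∀ i, x i ∈ I) (hlam : IsWeight lam)
    (hIo : IsOpen I) (hS₁ : {t | t ∈ I ∧ 0 < eFun E x lam t} ⊆ S)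
    (hS₂ : S ⊆ {t | t ∈ I ∧ 0 ≤ eFun E x lam t}) : S.Nonempty ∧ BddAbove S :=
  let ⟨_, hθ₁, _, _, hb⟩ := h.exists_isSignBracket hx hlam
  hb.nonempty_bddAbove hIo hθ₁ hS₁ hS₂

theorem csInf_mem (h : IsSemideviation I E) (hx : ∀ i, x i ∈ I) (hlam : IsWeight lam)
    (hI : I.OrdConnected) (hIo : IsOpen I) (hS₁ : {t | t ∈ I ∧ eFun E x lam t < 0} ⊆ S)
    (hS₂ : S ⊆ {t | t ∈ I ∧ eFun E x lam t ≤ 0}) : sInf S ∈ I :=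
  let ⟨_, hθ₁, _, hθ₂, hb⟩ := h.exists_isSignBracket hx hlam
  hI.out hθ₁ hθ₂ (hb.csInf_mem_Icc hIo hθ₂ hS₁ hS₂)

theorem csSup_mem (h : IsSemideviation I E) (hx : ∀ i, x i ∈ I) (hlam : IsWeight lam)
    (hI : I.OrdConnected) (hIo : IsOpen I) (hS₁ : {t | t ∈ I ∧ 0 < eFun E x lam t} ⊆ S)
    (hS₂ : S ⊆ {t | t ∈ I ∧ 0 ≤ eFun E x lam t}) : sSup S ∈ I :=
  let ⟨_, hθ₁, _, hθ₂, hb⟩ := h.exists_isSignBracket hx hlam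
  hI.out hθ₁ hθ₂ (hb.csSup_mem_Icc hIo hθ₁ hS₁ hS₂)

theorem LLD_le_UUD (h : IsSemideviation I E) (hx : ∀ i, x i ∈ I) (hlam : IsWeight lam)
    (hI : I.OrdConnected) (hIo : IsOpen I) : LLD I E x lam ≤ UUD I E x lam := by
  have hL : BddBelow {t | t ∈ I ∧ eFun E x lam t ≤ 0} :=
    And.right (h.nonempty_bddBelow hx hlam hIo (fun s hs => ⟨hs.1, hs.2.le⟩) subset_rfl)
  have hU : BddAbove {t | t ∈ I ∧ 0 ≤ eFun E x lam t} :=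
    And.right (h.nonempty_bddAbove hx hlam hIo (fun s hs => ⟨hs.1, hs.2.le⟩) subset_rfl)
  have hLI : LLD I E x lam ∈ I :=
    h.csInf_mem hx hlam hI hIo (fun s hs => ⟨hs.1, hs.2.le⟩) subset_rfl
  have hUI : UUD I E x lam ∈ I :=
    h.csSup_mem hx hlam hI hIo (fun s hs => ⟨hs.1, hs.2.le⟩) subset_rfl
  by_contra! hlt
  obtain ⟨t, hUt, htL⟩ := exists_between hlt
  have ht : t ∈ I := hI.out hUI hLI ⟨hUt.le, htL.le⟩
  rcases le_or_gt (eFun E x lam t) 0 with he | he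
  · exact htL.not_ge (csInf_le hL ⟨ht, he⟩)
  · exact hUt.not_ge (le_csSup hU ⟨ht, he.le⟩)

end IsSemideviation

section Subadditivity

variable {J K SE SF SG : Set ℝ} {E F G : ℝ → ℝ → ℝ} {n : ℕ} {x y lam : Fin n → ℝ}

theorem csInf_le_add_of_add_subset (hSE : BddBelow SE) (hSF : SF.Nonempty ∧ BddBelow SF)
    (hSG : SG.Nonempty ∧ BddBelow SG) (hsub : SF + SG ⊆ SE) : sInf SE ≤ sInf SF + sInf SG :=
  (csInf_le_csInf hSE (hSF.1.add hSG.1) hsub).trans_eq (csInf_add hSF.1 hSF.2 hSG.1 hSG.2)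

theorem csSup_le_add_of_add_notMem (hJ : J.OrdConnected) (hJo : IsOpen J) (hK : K.OrdConnected)
    (hKo : IsOpen K) (hSE : SE.Nonempty) (hSEJK : SE ⊆ J + K) (hSF : BddAbove SF)
    (hSG : BddAbove SG) (hSFJ : sSup SF ∈ J) (hSGK : sSup SG ∈ K)
    (hadd : ∀ a ∈ J, ∀ b ∈ K, a ∉ SF → b ∉ SG → a + b ∉ SE) : sSup SE ≤ sSup SF + sSup SG :=
  csSup_le hSE fun t ht => not_lt.1 fun hlt => by
    obtain ⟨a, ha, b, hb, hFa, hGb, rfl⟩ :=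
      exists_add_eq_of_add_lt hJ hJo hK hKo hSFJ hSGK (hSEJK ht) hlt
    exact hadd a ha b hb (notMem_of_csSup_lt hFa hSF) (notMem_of_csSup_lt hGb hSG) ht

theorem eFun_add_le
    (H : ∀ p ∈ J, ∀ u ∈ J, ∀ q ∈ K, ∀ v ∈ K, E (p + q) (u + v) ≤ F p u + G q v)
    (hx : ∀ i, x i ∈ J) (hy : ∀ i, y i ∈ K) (hlam : ∀ i, 0 ≤ lam i) {a b : ℝ} (ha : a ∈ J)
    (hb : b ∈ K) : eFun E (fun i => x i + y i) lam (a + b) ≤ eFun F x lam a + eFun G y lam b := by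
  simp only [eFun, ← Finset.sum_add_distrib, ← mul_add]
  exact Finset.sum_le_sum fun i _ =>
    mul_le_mul_of_nonneg_left (H _ (hx i) _ ha _ (hy i) _ hb) (hlam i)

variable (hE : IsSemideviation (J + K) E) (hF : IsSemideviation J F) (hG : IsSemideviation K G)
  (H : ∀ p ∈ J, ∀ u ∈ J, ∀ q ∈ K, ∀ v ∈ K, E (p + q) (u + v) ≤ F p u + G q v)
  (hx : ∀ i, x i ∈ J) (hy : ∀ i, y i ∈ K) (hlam : IsWeight lam)
include hE hF hG H hx hy hlam

theorem LLD_add_le (hJo : IsOpen J) (hKo : IsOpen K) :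
    LLD (J + K) E (fun i => x i + y i) lam ≤ LLD J F x lam + LLD K G y lam := by
  have hxy : ∀ i, x i + y i ∈ J + K := fun i => Set.add_mem_add (hx i) (hy i)
  refine csInf_le_add_of_add_subset
    (And.right (hE.nonempty_bddBelow hxy hlam hJo.add_right (fun t ht => ⟨ht.1, ht.2.le⟩)
      subset_rfl))
    (hF.nonempty_bddBelow hx hlam hJo (fun t ht => ⟨ht.1, ht.2.le⟩) subset_rfl)
    (hG.nonempty_bddBelow hy hlam hKo (fun t ht => ⟨ht.1, ht.2.le⟩) subset_rfl) ?_
  rintro _ ⟨a, ⟨ha, hFa⟩, b, ⟨hb, hGb⟩, rfl⟩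
  exact ⟨Set.add_mem_add ha hb, (eFun_add_le H hx hy hlam.1 ha hb).trans (add_nonpos hFa hGb)⟩

theorem LD_add_le (hJo : IsOpen J) (hKo : IsOpen K) :
    LD (J + K) E (fun i => x i + y i) lam ≤ LD J F x lam + LD K G y lam := by
  have hxy : ∀ i, x i + y i ∈ J + K := fun i => Set.add_mem_add (hx i) (hy i)
  refine csInf_le_add_of_add_subset
    (And.right (hE.nonempty_bddBelow hxy hlam hJo.add_right subset_rfl
      fun t ht => ⟨ht.1, ht.2.le⟩))
    (hF.nonempty_bddBelow hx hlam hJo subset_rfl fun t ht => ⟨ht.1, ht.2.le⟩)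
    (hG.nonempty_bddBelow hy hlam hKo subset_rfl fun t ht => ⟨ht.1, ht.2.le⟩) ?_
  rintro _ ⟨a, ⟨ha, hFa⟩, b, ⟨hb, hGb⟩, rfl⟩
  exact ⟨Set.add_mem_add ha hb, (eFun_add_le H hx hy hlam.1 ha hb).trans_lt (add_neg hFa hGb)⟩

theorem UUD_add_le (hJ : J.OrdConnected) (hJo : IsOpen J) (hK : K.OrdConnected)
    (hKo : IsOpen K) :
    UUD (J + K) E (fun i => x i + y i) lam ≤ UUD J F x lam + UUD K G y lam := by
  have hxy : ∀ i, x i + y i ∈ J + K := fun i => Set.add_mem_add (hx i) (hy i)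
  refine csSup_le_add_of_add_notMem hJ hJo hK hKo
    (And.left (hE.nonempty_bddAbove hxy hlam hJo.add_right (fun t ht => ⟨ht.1, ht.2.le⟩)
      subset_rfl))
    (fun t ht => ht.1)
    (And.right (hF.nonempty_bddAbove hx hlam hJo (fun t ht => ⟨ht.1, ht.2.le⟩) subset_rfl))
    (And.right (hG.nonempty_bddAbove hy hlam hKo (fun t ht => ⟨ht.1, ht.2.le⟩) subset_rfl))
    (hF.csSup_mem hx hlam hJ hJo (fun t ht => ⟨ht.1, ht.2.le⟩) subset_rfl)
    (hG.csSup_mem hy hlam hK hKo (fun t ht => ⟨ht.1, ht.2.le⟩) subset_rfl) ?_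
  intro a ha b hb hFa hGb hEab
  exact hEab.2.not_gt ((eFun_add_le H hx hy hlam.1 ha hb).trans_lt
    (add_neg (not_le.1 fun h => hFa ⟨ha, h⟩) (not_le.1 fun h => hGb ⟨hb, h⟩)))

theorem UD_add_le (hJ : J.OrdConnected) (hJo : IsOpen J) (hK : K.OrdConnected)
    (hKo : IsOpen K) :
    UD (J + K) E (fun i => x i + y i) lam ≤ UD J F x lam + UD K G y lam := by
  have hxy : ∀ i, x i + y i ∈ J + K := fun i => Set.add_mem_add (hx i) (hy i)
  refine csSup_le_add_of_add_notMem hJ hJo hK hKo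
    (And.left (hE.nonempty_bddAbove hxy hlam hJo.add_right subset_rfl
      fun t ht => ⟨ht.1, ht.2.le⟩))
    (fun t ht => ht.1)
    (And.right (hF.nonempty_bddAbove hx hlam hJo subset_rfl fun t ht => ⟨ht.1, ht.2.le⟩))
    (And.right (hG.nonempty_bddAbove hy hlam hKo subset_rfl fun t ht => ⟨ht.1, ht.2.le⟩))
    (hF.csSup_mem hx hlam hJ hJo subset_rfl fun t ht => ⟨ht.1, ht.2.le⟩)
    (hG.csSup_mem hy hlam hK hKo subset_rfl fun t ht => ⟨ht.1, ht.2.le⟩) ?_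
  intro a ha b hb hFa hGb hEab
  exact hEab.2.not_ge ((eFun_add_le H hx hy hlam.1 ha hb).trans
    (add_nonpos (not_lt.1 fun h => hFa ⟨ha, h⟩) (not_lt.1 fun h => hGb ⟨hb, h⟩)))

end Subadditivity

section Normalization

variable {I : Set ℝ} {E : ℝ → ℝ → ℝ} {d : ℝ → ℝ} {n : ℕ} {x lam : Fin n → ℝ}

theorem eFun_nrm (t : ℝ) : eFun (nrm E d) x lam t = eFun E x lam t / -d t := by
  simp only [eFun, nrm, Finset.sum_div, mul_div_assoc]

theorem IsSemideviation.nrm (h : IsSemideviation I E) (hd : ∀ t ∈ I, d t < 0) :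
    IsSemideviation I (nrm E d) := by
  intro x hx y hy hxy
  have hdy : 0 < -d y := neg_pos.2 (hd y hy)
  rcases hxy.lt_or_gt with hlt | hlt
  · exact (Real.sign_of_neg (div_neg_of_neg_of_pos (h.neg_of_lt hx hy hlt) hdy)).trans
      (Real.sign_of_neg (sub_neg.2 hlt)).symm
  · exact (Real.sign_of_pos (div_pos (h.pos_of_lt hx hy hlt) hdy)).trans
      (Real.sign_of_pos (sub_pos.2 hlt)).symm

theorem LLD_nrm (hd : ∀ t ∈ I, d t < 0) : LLD I (nrm E d) x lam = LLD I E x lam := by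
  simp only [LLD, eFun_nrm]
  congr 1; ext t
  exact and_congr_right fun ht => by rw [div_le_iff₀ (neg_pos.2 (hd t ht)), zero_mul]

theorem LD_nrm (hd : ∀ t ∈ I, d t < 0) : LD I (nrm E d) x lam = LD I E x lam := by
  simp only [LD, eFun_nrm]
  congr 1; ext t
  exact and_congr_right fun ht => by rw [div_lt_iff₀ (neg_pos.2 (hd t ht)), zero_mul]

theorem UD_nrm (hd : ∀ t ∈ I, d t < 0) : UD I (nrm E d) x lam = UD I E x lam := by
  simp only [UD, eFun_nrm]
  congr 1; ext t
  exact and_congr_right fun ht => by rw [lt_div_iff₀ (neg_pos.2 (hd t ht)), zero_mul]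

theorem UUD_nrm (hd : ∀ t ∈ I, d t < 0) : UUD I (nrm E d) x lam = UUD I E x lam := by
  simp only [UUD, eFun_nrm]
  congr 1; ext t
  exact and_congr_right fun ht => by rw [le_div_iff₀ (neg_pos.2 (hd t ht)), zero_mul]

end Normalization

section Asymptotics

variable {I : Set ℝ} {f g : ℝ → ℝ} {p u a c D : ℝ}

theorem antitone_mul_add_mul_abs {η : ℝ} (h : |η| ≤ -D) :
    Antitone fun r : ℝ => D * r + η * |r| := by
  intro r₁ r₂ hr
  obtain ⟨h₁, h₂⟩ := abs_le.1 h
  dsimp only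
  rcases abs_cases r₁ with ⟨e₁, _⟩ | ⟨e₁, _⟩ <;> rcases abs_cases r₂ with ⟨e₂, _⟩ | ⟨e₂, _⟩ <;>
    rw [e₁, e₂] <;> nlinarith

theorem eventually_forall_mul_add_neg_of_le (hI : I.OrdConnected) (hIo : IsOpen I) (hp : p ∈ I)
    (ha : a ∈ I) (hf : ContinuousOn f I) (hg : ContinuousOn g I)
    (hfp : ∀ t ∈ I, p < t → f t < 0) (hga : ∀ t ∈ I, a ≤ t → g t < 0) :
    ∀ᶠ s in 𝓝 0, 0 ≤ s → ∀ t ∈ I, a ≤ t → s * f t + g t < 0 := by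
  have hcompact : ∀ᶠ s in 𝓝 (0 : ℝ), ∀ t ∈ Icc a p, s * f t + g t < 0 := by
    refine isCompact_Icc.eventually_forall_of_forall_eventually fun t ht => ?_
    have htI : t ∈ I := hI.out ha hp ht
    have hcont : ContinuousAt (fun z : ℝ × ℝ => z.1 * f z.2 + g z.2) (0, t) :=
      (continuousAt_fst.mul ((hf.continuousAt (hIo.mem_nhds htI)).comp continuousAt_snd)).add
        ((hg.continuousAt (hIo.mem_nhds htI)).comp continuousAt_snd)
    exact hcont.eventually_lt continuousAt_const (by simpa using hga t htI ht.1)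
  filter_upwards [hcompact] with s hs hs0 t ht hat
  rcases le_or_gt t p with htp | hpt
  · exact hs t ⟨hat, htp⟩
  · exact add_neg_of_nonpos_of_neg (mul_nonpos_of_nonneg_of_nonpos hs0 (hfp t ht hpt).le)
      (hga t ht hat)

theorem exists_forall_mul_add_neg_near (hIo : IsOpen I) (hu : u ∈ I) (hf : ContinuousAt f u)
    (hg0 : g u = 0) (hg' : HasDerivAt g D u) (hD : D < 0) (hc : f u + D * c < 0) :
    ∃ a ∈ I, u < a ∧ ∀ᶠ s in 𝓝[>] 0, ∀ t, u + s * c < t → t ≤ a → s * f t + g t < 0 := by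
  obtain ⟨η, ⟨hηD, hηc⟩, hη⟩ : ∃ η, (η < -D ∧ η * (1 + |c|) < -(f u + D * c)) ∧ 0 < η := by
    have h₁ : ∀ᶠ η in 𝓝 (0 : ℝ), η < -D := eventually_lt_nhds (by linarith)
    have h₂ : ∀ᶠ η in 𝓝 (0 : ℝ), η * (1 + |c|) < -(f u + D * c) :=
      (continuous_mul_const _).continuousAt.eventually_lt continuousAt_const
        (by rw [zero_mul]; linarith)
    exact (Eventually.and (nhdsWithin_le_nhds (h₁.and h₂))
      (self_mem_nhdsWithin (s := Ioi 0))).exists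
  have hloc : ∀ᶠ t in 𝓝 u, t ∈ I ∧ f t < f u + η ∧ g t ≤ D * (t - u) + η * |t - u| := by
    refine Eventually.and (hIo.mem_nhds hu)
      ((hf.eventually_lt continuousAt_const (by linarith)).and ?_)
    filter_upwards [(hasDerivAt_iff_isLittleO.1 hg').def hη] with t ht
    rw [hg0, sub_zero, smul_eq_mul, Real.norm_eq_abs, Real.norm_eq_abs] at ht
    linarith [(abs_le.1 ht).2]
  obtain ⟨δ, hδ, hball⟩ := Metric.eventually_nhds_iff.1 hloc
  refine ⟨u + δ / 2, (hball ?_).1, by linarith, ?_⟩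
  · rw [Real.dist_eq, add_sub_cancel_left, abs_of_pos (half_pos hδ)]
    exact half_lt_self hδ
  have hsc : ∀ᶠ s in 𝓝 (0 : ℝ), -δ < s * c :=
    continuousAt_const.eventually_lt (continuous_mul_const c).continuousAt (by simpa using hδ)
  filter_upwards [nhdsWithin_le_nhds hsc, self_mem_nhdsWithin] with s hsc (hs : 0 < s) t hct hta
  obtain ⟨-, hft, hgt⟩ := hball (show dist t u < δ by
    rw [Real.dist_eq, abs_lt]; constructor <;> linarith)
  -- the bound on `g t` is antitone in `t - u`, so it is largest at `t - u = s * c`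
  have hmono : D * (t - u) + η * |t - u| ≤ D * (s * c) + η * |s * c| :=
    antitone_mul_add_mul_abs ((abs_of_pos hη).trans_le hηD.le) (show s * c ≤ t - u by linarith)
  calc s * f t + g t < s * (f u + η) + (D * (s * c) + η * |s * c|) := by
        nlinarith [mul_lt_mul_of_pos_left hft hs]
    _ = s * (f u + D * c + η * (1 + |c|)) := by rw [abs_mul, abs_of_pos hs]; ring
    _ < 0 := mul_neg_of_pos_of_neg hs (by linarith)

theorem eventually_forall_mul_add_neg (hI : I.OrdConnected) (hIo : IsOpen I) (hp : p ∈ I)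
    (hu : u ∈ I) (hf : ContinuousOn f I) (hg : ContinuousOn g I)
    (hfp : ∀ t ∈ I, p < t → f t < 0) (hgu : ∀ t ∈ I, u < t → g t < 0) (hg0 : g u = 0)
    (hg' : HasDerivAt g D u) (hD : D < 0) (hc : f u + D * c < 0) :
    ∀ᶠ s in 𝓝[>] 0, ∀ t ∈ I, u + s * c < t → s * f t + g t < 0 := by
  obtain ⟨a, ha, hua, hnear⟩ :=
    exists_forall_mul_add_neg_near hIo hu (hf.continuousAt (hIo.mem_nhds hu)) hg0 hg' hD hc
  have hfar := eventually_forall_mul_add_neg_of_le hI hIo hp ha hf hg hfp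
    fun t ht hat => hgu t ht (hua.trans_le hat)
  filter_upwards [hnear, nhdsWithin_le_nhds hfar, self_mem_nhdsWithin]
    with s hnear hfar (hs : 0 < s) t ht hct
  rcases le_total t a with hta | hat
  · exact hnear t hct hta
  · exact hfar hs.le t ht hat

theorem eventually_forall_mul_add_pos (hI : I.OrdConnected) (hIo : IsOpen I) (hp : p ∈ I)
    (hu : u ∈ I) (hf : ContinuousOn f I) (hg : ContinuousOn g I)
    (hfp : ∀ t ∈ I, t < p → 0 < f t) (hgu : ∀ t ∈ I, t < u → 0 < g t) (hg0 : g u = 0)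
    (hg' : HasDerivAt g D u) (hD : D < 0) (hc : 0 < f u + D * c) :
    ∀ᶠ s in 𝓝[>] 0, ∀ t ∈ I, t < u + s * c → 0 < s * f t + g t := by
  have hg'' : HasDerivAt (fun t => g (-t)) (-D) (-u) := by
    simpa using HasDerivAt.comp_const_sub 0 (-u) (by simpa using hg')
  have hneg := eventually_forall_mul_add_neg (f := fun t => -f (-t)) (g := fun t => -g (-t))
    (p := -p) (u := -u) (c := -c) hI.neg hIo.neg (by simpa using hp) (by simpa using hu)
    (hf.comp continuousOn_neg fun t ht => ht).neg (hg.comp continuousOn_neg fun t ht => ht).neg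
    (fun t ht hpt => neg_neg_of_pos (hfp (-t) ht (by linarith)))
    (fun t ht hut => neg_neg_of_pos (hgu (-t) ht (by linarith))) (by simp [hg0])
    (by simpa using hg''.fun_neg) hD (by simp; linarith)
  filter_upwards [hneg] with s hs t ht htc
  have := hs (-t) (by simpa using ht) (by linarith)
  simp only [neg_neg] at this
  linarith

end Asymptotics

theorem IsNormalizable.eventually_isSignBracket {I : Set ℝ} {E : ℝ → ℝ → ℝ} {d : ℝ → ℝ}
    {p u ε : ℝ} (hE : IsNormalizable I E d) (hI : I.OrdConnected) (hIo : IsOpen I) (hp : p ∈ I)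
    (hu : u ∈ I) (hε : 0 < ε) :
    ∀ᶠ s in 𝓝[>] 0, u + s * (nrm E d p u - ε) ∈ I ∧ u + s * (nrm E d p u + ε) ∈ I ∧
      IsSignBracket I (fun t => s * E p t + E u t)
        (u + s * (nrm E d p u - ε)) (u + s * (nrm E d p u + ε)) := by
  obtain ⟨hsd, hcont, hder, hneg, -⟩ := hE
  have hdu := hneg u hu
  have hder' : HasDerivAt (E u) (d u) u := (hder u hu).hasDerivAt (hIo.mem_nhds hu)
  have h0 : E u u = 0 := hsd.apply_self hIo hu hder'.continuousAt
  have hval : E p u + d u * nrm E d p u = 0 := by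
    rw [nrm, mul_div_assoc', div_neg, mul_div_cancel_left₀ _ hdu.ne, add_neg_cancel]
  have hmem (c : ℝ) : ∀ᶠ s in 𝓝[>] (0 : ℝ), u + s * c ∈ I := by
    have : Tendsto (fun s : ℝ => u + s * c) (𝓝 0) (𝓝 u) :=
      (by fun_prop : Continuous fun s : ℝ => u + s * c).tendsto' 0 u (by simp)
    exact nhdsWithin_le_nhds (this (hIo.mem_nhds hu))
  filter_upwards [hmem _, hmem _,
    eventually_forall_mul_add_pos hI hIo hp hu (hcont p hp) (hcont u hu)
      (fun t ht htp => hsd.pos_of_lt hp ht htp) (fun t ht htu => hsd.pos_of_lt hu ht htu) h0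
      hder' hdu (c := nrm E d p u - ε) (by nlinarith),
    eventually_forall_mul_add_neg hI hIo hp hu (hcont p hp) (hcont u hu)
      (fun t ht hpt => hsd.neg_of_lt hp ht hpt) (fun t ht hut => hsd.neg_of_lt hu ht hut) h0
      hder' hdu (c := nrm E d p u + ε) (by nlinarith)] with s h₁ h₂ hpos hneg
  exact ⟨h₁, h₂, hpos, hneg⟩

theorem tendsto_sub_div_of_eventually_mem_Icc {m : ℝ → ℝ} {u c : ℝ}
    (h : ∀ ε > 0, ∀ᶠ s in 𝓝[>] 0, m s ∈ Icc (u + s * (c - ε)) (u + s * (c + ε))) :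
    Tendsto (fun s => (m s - u) / s) (𝓝[>] 0) (𝓝 c) := by
  refine Metric.tendsto_nhds.2 fun ε hε => ?_
  filter_upwards [h (ε / 2) (half_pos hε), self_mem_nhdsWithin] with s ⟨h₁, h₂⟩ (hs : 0 < s)
  rw [Real.dist_eq, abs_sub_lt_iff, sub_lt_iff_lt_add, sub_lt_comm, div_lt_iff₀ hs,
    lt_div_iff₀ hs]
  constructor <;> nlinarith

def IsBracketedMean
    (M : Set ℝ → (ℝ → ℝ → ℝ) → ∀ {n : ℕ}, (Fin n → ℝ) → (Fin n → ℝ) → ℝ) : Prop :=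
  ∀ (I : Set ℝ) (E : ℝ → ℝ → ℝ) {n : ℕ} (x lam : Fin n → ℝ) (θ₁ θ₂ : ℝ), IsOpen I → θ₁ ∈ I →
    θ₂ ∈ I → IsSignBracket I (eFun E x lam) θ₁ θ₂ → M I E x lam ∈ Icc θ₁ θ₂

theorem isBracketedMean_LLD : IsBracketedMean @LLD := fun _ _ _ _ _ _ _ hIo _ hθ₂ h =>
  h.csInf_mem_Icc hIo hθ₂ (fun _ ht => ⟨ht.1, ht.2.le⟩) subset_rfl

theorem isBracketedMean_LD : IsBracketedMean @LD := fun _ _ _ _ _ _ _ hIo _ hθ₂ h =>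
  h.csInf_mem_Icc hIo hθ₂ subset_rfl fun _ ht => ⟨ht.1, ht.2.le⟩

theorem isBracketedMean_UD : IsBracketedMean @UD := fun _ _ _ _ _ _ _ hIo hθ₁ _ h =>
  h.csSup_mem_Icc hIo hθ₁ subset_rfl fun _ ht => ⟨ht.1, ht.2.le⟩

theorem isBracketedMean_UUD : IsBracketedMean @UUD := fun _ _ _ _ _ _ _ hIo hθ₁ _ h =>
  h.csSup_mem_Icc hIo hθ₁ (fun _ ht => ⟨ht.1, ht.2.le⟩) subset_rfl

theorem IsBracketedMean.tendsto
    {M : Set ℝ → (ℝ → ℝ → ℝ) → ∀ {n : ℕ}, (Fin n → ℝ) → (Fin n → ℝ) → ℝ}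
    {I : Set ℝ} {E : ℝ → ℝ → ℝ} {d : ℝ → ℝ} {x : Fin 2 → ℝ} (hM : IsBracketedMean M)
    (hI : I.OrdConnected) (hIo : IsOpen I) (hE : IsNormalizable I E d) (hx : ∀ i, x i ∈ I) :
    Tendsto (fun s => (M I E x ![s, 1] - x 1) / s) (𝓝[>] 0) (𝓝 (nrm E d (x 0) (x 1))) := by
  refine tendsto_sub_div_of_eventually_mem_Icc fun ε hε => ?_
  filter_upwards [hE.eventually_isSignBracket hI hIo (hx 0) (hx 1) hε] with s ⟨h₁, h₂, hb⟩
  exact hM I E x ![s, 1] _ _ hIo h₁ h₂ (by rwa [eFun_two])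

theorem nrm_add_le_of_mean_add_le
    {ME MF MG : Set ℝ → (ℝ → ℝ → ℝ) → ∀ {n : ℕ}, (Fin n → ℝ) → (Fin n → ℝ) → ℝ}
    {J K : Set ℝ} {E F G : ℝ → ℝ → ℝ} {dE dF dG : ℝ → ℝ}
    (hME : IsBracketedMean ME) (hMF : IsBracketedMean MF) (hMG : IsBracketedMean MG)
    (hJ : J.OrdConnected) (hJo : IsOpen J) (hK : K.OrdConnected) (hKo : IsOpen K)
    (hE : IsNormalizable (J + K) E dE) (hF : IsNormalizable J F dF) (hG : IsNormalizable K G dG)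
    (H : ∀ (n : ℕ) (x y lam : Fin n → ℝ), (∀ i, x i ∈ J) → (∀ i, y i ∈ K) → IsWeight lam →
      ME (J + K) E (fun i => x i + y i) lam ≤ MF J F x lam + MG K G y lam) :
    ∀ p ∈ J, ∀ u ∈ J, ∀ q ∈ K, ∀ v ∈ K,
      nrm E dE (p + q) (u + v) ≤ nrm F dF p u + nrm G dG q v := by
  intro p hp u hu q hq v hv
  have hx : ∀ i, ![p, u] i ∈ J := Fin.forall_fin_two.2 ⟨hp, hu⟩
  have hy : ∀ i, ![q, v] i ∈ K := Fin.forall_fin_two.2 ⟨hq, hv⟩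
  have hE' := hME.tendsto (hJ.add hK) hJo.add_right hE fun i => Set.add_mem_add (hx i) (hy i)
  refine le_of_tendsto_of_tendsto hE'
    ((hMF.tendsto hJ hJo hF hx).add (hMG.tendsto hK hKo hG hy)) ?_
  filter_upwards [self_mem_nhdsWithin] with s (hs : 0 < s)
  rw [← add_div, div_le_div_iff_of_pos_right hs]
  linarith [H 2 ![p, u] ![q, v] ![s, 1] hx hy (isWeight_two hs.le)]

/-- Minkowski-type inequalities: equivalence of the sum-of-means inequalities for the
four semideviation means (on `I = J + K`, `J`, `K`) with the pointwise subadditivity of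
the normalizations. -/
theorem statement15 (J K : Set ℝ)
    (hJ : J.OrdConnected) (hJo : IsOpen J)
    (hK : K.OrdConnected) (hKo : IsOpen K)
    (E F G : ℝ → ℝ → ℝ) (dE dF dG : ℝ → ℝ)
    (hE : IsNormalizable (Set.image2 (· + ·) J K) E dE)
    (hF : IsNormalizable J F dF) (hG : IsNormalizable K G dG) :
    ((∀ (n : ℕ) (x y lam : Fin n → ℝ), (∀ i, x i ∈ J) → (∀ i, y i ∈ K) → IsWeight lam →
        LLD (Set.image2 (· + ·) J K) E (fun i => x i + y i) lam
          ≤ LLD J F x lam + LLD K G y lam) ↔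
     (∀ p ∈ J, ∀ u ∈ J, ∀ q ∈ K, ∀ v ∈ K,
        nrm E dE (p + q) (u + v) ≤ nrm F dF p u + nrm G dG q v)) ∧
    ((∀ (n : ℕ) (x y lam : Fin n → ℝ), (∀ i, x i ∈ J) → (∀ i, y i ∈ K) → IsWeight lam →
        LD (Set.image2 (· + ·) J K) E (fun i => x i + y i) lam
          ≤ LD J F x lam + LD K G y lam) ↔
     (∀ p ∈ J, ∀ u ∈ J, ∀ q ∈ K, ∀ v ∈ K,
        nrm E dE (p + q) (u + v) ≤ nrm F dF p u + nrm G dG q v)) ∧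
    ((∀ (n : ℕ) (x y lam : Fin n → ℝ), (∀ i, x i ∈ J) → (∀ i, y i ∈ K) → IsWeight lam →
        UD (Set.image2 (· + ·) J K) E (fun i => x i + y i) lam
          ≤ UD J F x lam + UD K G y lam) ↔
     (∀ p ∈ J, ∀ u ∈ J, ∀ q ∈ K, ∀ v ∈ K,
        nrm E dE (p + q) (u + v) ≤ nrm F dF p u + nrm G dG q v)) ∧
    ((∀ (n : ℕ) (x y lam : Fin n → ℝ), (∀ i, x i ∈ J) → (∀ i, y i ∈ K) → IsWeight lam →
        UUD (Set.image2 (· + ·) J K) E (fun i => x i + y i) lam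
          ≤ UUD J F x lam + UUD K G y lam) ↔
     (∀ p ∈ J, ∀ u ∈ J, ∀ q ∈ K, ∀ v ∈ K,
        nrm E dE (p + q) (u + v) ≤ nrm F dF p u + nrm G dG q v)) ∧
    ((∀ (n : ℕ) (x y lam : Fin n → ℝ), (∀ i, x i ∈ J) → (∀ i, y i ∈ K) → IsWeight lam →
        LLD (Set.image2 (· + ·) J K) E (fun i => x i + y i) lam
          ≤ UUD J F x lam + UUD K G y lam) ↔
     (∀ p ∈ J, ∀ u ∈ J, ∀ q ∈ K, ∀ v ∈ K,
        nrm E dE (p + q) (u + v) ≤ nrm F dF p u + nrm G dG q v)) := by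
  simp only [Set.image2_add] at hE ⊢
  have hdE := hE.2.2.2.1
  have hdF := hF.2.2.2.1
  have hdG := hG.2.2.2.1
  have hE' := hE.1.nrm hdE
  have hF' := hF.1.nrm hdF
  have hG' := hG.1.nrm hdG
  have fwd {ME MF MG} (hME : IsBracketedMean ME) (hMF : IsBracketedMean MF)
      (hMG : IsBracketedMean MG) :=
    nrm_add_le_of_mean_add_le hME hMF hMG hJ hJo hK hKo hE hF hG
  refine ⟨⟨fwd isBracketedMean_LLD isBracketedMean_LLD isBracketedMean_LLD,
      fun H n x y lam hx hy hlam => ?_⟩,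
    ⟨fwd isBracketedMean_LD isBracketedMean_LD isBracketedMean_LD,
      fun H n x y lam hx hy hlam => ?_⟩,
    ⟨fwd isBracketedMean_UD isBracketedMean_UD isBracketedMean_UD,
      fun H n x y lam hx hy hlam => ?_⟩,
    ⟨fwd isBracketedMean_UUD isBracketedMean_UUD isBracketedMean_UUD,
      fun H n x y lam hx hy hlam => ?_⟩,
    ⟨fwd isBracketedMean_LLD isBracketedMean_UUD isBracketedMean_UUD,
      fun H n x y lam hx hy hlam => ?_⟩⟩
  · simpa only [LLD_nrm hdE, LLD_nrm hdF, LLD_nrm hdG] using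
      LLD_add_le hE' hF' hG' H hx hy hlam hJo hKo
  · simpa only [LD_nrm hdE, LD_nrm hdF, LD_nrm hdG] using
      LD_add_le hE' hF' hG' H hx hy hlam hJo hKo
  · simpa only [UD_nrm hdE, UD_nrm hdF, UD_nrm hdG] using
      UD_add_le hE' hF' hG' H hx hy hlam hJ hJo hK hKo
  · simpa only [UUD_nrm hdE, UUD_nrm hdF, UUD_nrm hdG] using
      UUD_add_le hE' hF' hG' H hx hy hlam hJ hJo hK hKo
  · refine (hE.1.LLD_le_UUD (fun i => Set.add_mem_add (hx i) (hy i)) hlam (hJ.add hK)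
      hJo.add_right).trans ?_
    simpa only [UUD_nrm hdE, UUD_nrm hdF, UUD_nrm hdG] using
      UUD_add_le hE' hF' hG' H hx hy hlam hJ hJo hK hKo
end

section
/- Consider the quasiarithmetic mean 𝒜_cosh on (0,∞) generated by f = cosh. Then for all n ∈ ℕ, x ∈ (0,∞)ⁿ and weight vectors λ, lim_{t→0⁺} 𝒜_cosh(tx,λ)/t = 𝒫_2(x,λ) = √((λ₁x₁²+⋯+λₙxₙ²)/(λ₁+⋯+λₙ)); that is, the lower and upper homogenizations of 𝒜_cosh both equal the quadratic power mean 𝒫_2. -/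
open Set Filter Topology

/-- Weighted quasiarithmetic mean generated by `f`, with `g` the inverse of `f`. -/
noncomputable def QAM (f g : ℝ → ℝ) {n : ℕ} (x lam : Fin n → ℝ) : ℝ :=
  g ((∑ i, lam i * f (x i)) / ∑ i, lam i)

/-- Weighted power mean of exponent `p ∈ ℝ` (geometric mean for `p = 0`). -/
noncomputable def powerMean (p : ℝ) {n : ℕ} (x lam : Fin n → ℝ) : ℝ :=
  if p = 0 then (∏ i, x i ^ lam i) ^ (∑ i, lam i)⁻¹
  else ((∑ i, lam i * x i ^ p) / ∑ i, lam i) ^ p⁻¹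

/-- The filter `t → 0⁺` restricted to those `t` with `t • x ∈ Iⁿ`. -/
def homFilter (I : Set ℝ) {n : ℕ} (x : Fin n → ℝ) : Filter ℝ :=
  (𝓝[>] (0:ℝ)) ⊓ Filter.principal {t : ℝ | ∀ i, t * x i ∈ I}

/-- The inverse of `cosh` on `[0,∞)`: `arcosh y = log (y + √(y² - 1))`. -/
noncomputable def arcoshFn (y : ℝ) : ℝ := Real.log (y + Real.sqrt (y ^ 2 - 1))

/-
Near `1`, `cosh` inverts like `y ↦ √(2 (y - 1))`, since `cosh u = 1 + u² / 2 + o(u²)`.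
Averaging `cosh (t xᵢ)` gives `1 + t² 𝒫₂(x,λ)² / 2 + o(t²)`, so `𝒜_cosh(tx,λ) / t → 𝒫₂(x,λ)`.
To avoid dividing by quantities that may vanish, `sinh` and `arsinh` are written as
`u * dslope f 0 u`, whose second factor is continuous with value `1` at `0`.
-/

open Real

lemma eq_mul_dslope_of_map_zero {f : ℝ → ℝ} (hf : f 0 = 0) (u : ℝ) :
    f u = u * dslope f 0 u := by
  simpa [hf] using (sub_smul_dslope f 0 u).symm

lemma HasDerivAt.tendsto_dslope {f : ℝ → ℝ} {f' a : ℝ} (hf : HasDerivAt f f' a) :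
    Tendsto (dslope f a) (𝓝 a) (𝓝 f') := by
  simpa [dslope_same, hf.deriv] using
    (continuousAt_dslope_same.2 hf.differentiableAt).tendsto

lemma Real.cosh_sub_one_eq_mul_dslope_sinh (u : ℝ) :
    cosh u - 1 = u ^ 2 / 2 * dslope sinh 0 (u / 2) ^ 2 := by
  have hcosh : cosh u = cosh (2 * (u / 2)) := by ring_nf
  rw [hcosh, cosh_two_mul, cosh_sq,
    eq_mul_dslope_of_map_zero sinh_zero (u / 2)]
  ring

lemma tendsto_cosh_mul_sub_one_div_sq (a : ℝ) :
    Tendsto (fun t => (cosh (t * a) - 1) / t ^ 2) (𝓝[≠] 0) (𝓝 (a ^ 2 / 2)) := by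
  have hslope : Tendsto (fun t => dslope sinh 0 (t * a / 2)) (𝓝 0) (𝓝 1) := by
    refine (hasDerivAt_sinh 0).tendsto_dslope.comp ?_ |>.trans (by simp)
    exact Continuous.tendsto' (by fun_prop) 0 0 (by simp)
  refine ((hslope.pow 2).const_mul (a ^ 2 / 2)).mono_left nhdsWithin_le_nhds
    |>.congr' ?_ |>.trans (by simp)
  filter_upwards [self_mem_nhdsWithin] with t (ht : t ≠ 0)
  rw [cosh_sub_one_eq_mul_dslope_sinh]
  field_simp

lemma arcoshFn_cosh {a : ℝ} (ha : 0 ≤ a) : arcoshFn (cosh a) = a := by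
  have hsq : cosh a ^ 2 - 1 = sinh a ^ 2 := by
    linarith [cosh_sq_sub_sinh_sq a]
  rw [arcoshFn, hsq, sqrt_sq (sinh_nonneg_iff.mpr ha), cosh_add_sinh,
    log_exp]

lemma arcoshFn_eq_two_mul_arsinh {y : ℝ} (hy : 1 ≤ y) :
    arcoshFn y = 2 * arsinh √((y - 1) / 2) := by
  have hcosh : cosh (2 * arsinh √((y - 1) / 2)) = y := by
    rw [cosh_two_mul, cosh_sq, sinh_arsinh, sq_sqrt (by linarith)]
    ring
  conv_lhs => rw [← hcosh]
  exact arcoshFn_cosh (mul_nonneg zero_le_two (arsinh_nonneg_iff.2 (sqrt_nonneg _)))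

lemma tendsto_arcoshFn_div_of_tendsto_sub_one_div_sq {g : ℝ → ℝ} {c : ℝ}
    (hg : ∀ t, 1 ≤ g t) (hlim : Tendsto (fun t => (g t - 1) / t ^ 2) (𝓝[>] 0) (𝓝 (c / 2))) :
    Tendsto (fun t => arcoshFn (g t) / t) (𝓝[>] 0) (𝓝 √c) := by
  set w : ℝ → ℝ := fun t => √((g t - 1) / 2)
  have hw_div : Tendsto (fun t => w t / t) (𝓝[>] 0) (𝓝 (√c / 2)) := by
    have hsqrt := (hlim.div_const 2).sqrt
    rw [div_div, show (2 : ℝ) * 2 = 2 ^ 2 by norm_num, sqrt_div' _ (by positivity),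
      sqrt_sq zero_le_two] at hsqrt
    refine hsqrt.congr' ?_
    filter_upwards [self_mem_nhdsWithin] with t (ht : 0 < t)
    rw [div_right_comm, sqrt_div' _ (by positivity), sqrt_sq ht.le]
  have hw : Tendsto w (𝓝[>] 0) (𝓝 0) := by
    have hprod := (tendsto_nhdsWithin_of_tendsto_nhds tendsto_id).mul hw_div
    rw [zero_mul] at hprod
    refine hprod.congr' ?_
    filter_upwards [self_mem_nhdsWithin] with t (ht : 0 < t)
    exact mul_div_cancel₀ _ ht.ne'
  have hslope := (hasDerivAt_arsinh 0).tendsto_dslope.comp hw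
  rw [show (√(1 + 0 ^ 2 : ℝ))⁻¹ = 1 by simp] at hslope
  convert (hw_div.const_mul 2).mul hslope using 2 with t
  · rw [arcoshFn_eq_two_mul_arsinh (hg t), eq_mul_dslope_of_map_zero arsinh_zero]
    simp only [Function.comp, w]
    ring
  · ring

lemma one_le_average_cosh {n : ℕ} {lam : Fin n → ℝ} (hlam : IsWeight lam) (u : Fin n → ℝ) :
    1 ≤ (∑ i, lam i * cosh (u i)) / ∑ i, lam i := by
  rw [le_div_iff₀ hlam.2, one_mul]
  exact Finset.sum_le_sum fun i _ => le_mul_of_one_le_right (hlam.1 i) (one_le_cosh _)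

lemma tendsto_average_cosh_mul_sub_one_div_sq {n : ℕ} (x lam : Fin n → ℝ)
    (hlam : ∑ i, lam i ≠ 0) :
    Tendsto (fun t => ((∑ i, lam i * cosh (t * x i)) / (∑ i, lam i) - 1) / t ^ 2)
      (𝓝[≠] 0) (𝓝 ((∑ i, lam i * x i ^ 2) / (∑ i, lam i) / 2)) := by
  have hsum := (tendsto_finsetSum Finset.univ fun i _ =>
    (tendsto_cosh_mul_sub_one_div_sq (x i)).const_mul (lam i)).div_const (∑ i, lam i)
  convert hsum using 2 with t
  · rw [div_sub_one hlam, ← Finset.sum_sub_distrib, div_right_comm]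
    congr 1
    rw [Finset.sum_div]
    exact Finset.sum_congr rfl fun i _ => by ring
  · rw [div_right_comm]
    congr 1
    rw [Finset.sum_div]
    simp only [mul_div_assoc]

lemma powerMean_two {n : ℕ} (x lam : Fin n → ℝ) :
    powerMean 2 x lam = √((∑ i, lam i * x i ^ 2) / ∑ i, lam i) := by
  simp only [powerMean, two_ne_zero, if_false, rpow_two, sqrt_eq_rpow, one_div]

theorem statement17_general (n : ℕ) (x lam : Fin n → ℝ)
    (hlam : IsWeight lam) :
    Filter.Tendsto (fun t : ℝ => QAM Real.cosh arcoshFn (fun i => t * x i) lam / t)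
      (𝓝[>] (0:ℝ)) (𝓝 (powerMean 2 x lam)) ∧
    powerMean 2 x lam = Real.sqrt ((∑ i, lam i * (x i) ^ 2) / ∑ i, lam i) := by
  rw [powerMean_two]
  refine ⟨?_, rfl⟩
  have hcosh := tendsto_average_cosh_mul_sub_one_div_sq x lam hlam.2.ne'
  exact tendsto_arcoshFn_div_of_tendsto_sub_one_div_sq
    (fun t => one_le_average_cosh hlam fun i => t * x i)
    (hcosh.mono_left (nhdsWithin_mono 0 fun _ ht => ne_of_gt ht))

/-- Example: the homogenization of the quasiarithmetic mean generated by `cosh` on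
`(0,∞)` is the quadratic power mean `𝒫₂`: `𝒜_cosh(tx,λ)/t → 𝒫₂(x,λ)` as `t → 0⁺`. -/
theorem statement17 (n : ℕ) (x lam : Fin n → ℝ) (hx : ∀ i, 0 < x i)
    (hlam : IsWeight lam) :
    Filter.Tendsto (fun t : ℝ => QAM Real.cosh arcoshFn (fun i => t * x i) lam / t)
      (𝓝[>] (0:ℝ)) (𝓝 (powerMean 2 x lam)) ∧
    powerMean 2 x lam = Real.sqrt ((∑ i, lam i * (x i) ^ 2) / ∑ i, lam i) :=
  statement17_general n x lam hlam
end
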